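/- arXiv:2102.11897 — 2 statements merged into one kernel-verified Lean document; each statement's English description precedes it below -/
import Mathlib

section
/- Let k ≥ 1 be an integer, let p₁, …, p_k be primes, let a₁, …, a_k be integers with gcd(a_j, p_j) = 1 for each j, let ρ ≥ 0 be real, and let x > 0 be real. Then ∑'_{n₁n₂⋯n_k ≤ x} n₁n₂⋯n_k (∏_{j=1}^{k} sin(2π n_j a_j/p_j)) (x² − (n₁⋯n_k)²)^{ρ} = ((−i)^k / (φ(p₁)⋯φ(p_k))) ∑_{χ₁ odd mod p₁} ⋯ ∑_{χ_k odd mod p_k} (∏_{j=1}^{k} χ_j(a_j) τ(χ̄_j)) · ∑'_{n ≤ x} n·d_{χ₁,…,χ_k}(n) (x² − n²)^{ρ}, where the outer sums on the right run over all odd Dirichlet characters modulo p₁, …, p_k respectively. -/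
open Complex
open scoped Real Classical

/-- The Gauss sum `τ(χ) = ∑_{m=1}^{q} χ(m) e^{2πi m/q}`. -/
noncomputable def gaussTau {q : ℕ} (χ : DirichletCharacter ℂ q) : ℂ :=
  ∑ m ∈ Finset.Icc 1 q, χ m * Complex.exp (2 * π * Complex.I * m / q)

/-- The complex conjugate of a Dirichlet character. -/
noncomputable def conjChar {q : ℕ} (χ : DirichletCharacter ℂ q) :
    DirichletCharacter ℂ q :=
  χ.ringHomComp (starRingEnd ℂ)

/-- The `k`-fold twisted divisor function
`d_{χ₁,…,χ_k}(n) = ∑_{n₁⋯n_k = n} χ₁(n₁)⋯χ_k(n_k)`. -/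
noncomputable def dChiK {k : ℕ} {p : Fin k → ℕ}
    (χ : ∀ j, DirichletCharacter ℂ (p j)) (n : ℕ) : ℂ :=
  ∑ t ∈ (Fintype.piFinset fun _ : Fin k => n.divisors).filter
      (fun t => ∏ j, t j = n),
    ∏ j, χ j (t j)

/-- The primed sum `∑'_{n ≤ x} f(n)`: for integer `x` the term `f(x)` is
counted with weight `1/2`. -/
noncomputable def primedSumC (x : ℝ) (f : ℕ → ℂ) : ℂ :=
  (∑ n ∈ Finset.Icc 1 ⌊x⌋₊, f n) -
    if (⌊x⌋₊ : ℝ) = x then (1/2 : ℂ) * f ⌊x⌋₊ else 0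

/-- The primed sum over ordered `k`-tuples of positive integers with product at
most `x`: for integer `x`, terms whose product equals `x` are counted with
weight `1/2`. -/
noncomputable def primedTupleSumC (k : ℕ) (x : ℝ) (f : (Fin k → ℕ) → ℂ) : ℂ :=
  (∑ t ∈ (Fintype.piFinset fun _ : Fin k => Finset.Icc 1 ⌊x⌋₊).filter
      (fun t => ((∏ j, t j : ℕ) : ℝ) ≤ x), f t) -
  if ∃ m : ℕ, (m : ℝ) = x then
    (1/2 : ℂ) * ∑ t ∈ (Fintype.piFinset fun _ : Fin k => Finset.Icc 1 ⌊x⌋₊).filter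
      (fun t => ((∏ j, t j : ℕ) : ℝ) = x), f t
  else 0


/-! An odd character `χ` modulo a prime `p` is nontrivial, hence primitive, so its twisted
Gauss sum is `χ(w) τ(χ̄) = ∑_z χ̄(z) e(wz/p)`. The sum of the odd characters mod `p` is
`φ(p)/2` times the difference of the point masses at `1` and `-1`, whence
`∑_{χ odd} χ(w) τ(χ̄) = (φ(p)/2) (e(w/p) - e(-w/p)) = i φ(p) sin(2π w/p)`.
Expanding each `sin(2π nⱼ aⱼ/pⱼ)` this way and grouping the tuples `(n₁, …, n_k)` by their
product `n` turns `∏ χⱼ(nⱼ)` into `d_{χ₁,…,χ_k}(n)` and the primed tuple sum into the primed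
sum over `n`. -/

namespace DirichletCharacter

lemma Odd.ne_one {n : ℕ} {χ : DirichletCharacter ℂ n} (hχ : χ.Odd) : χ ≠ 1 := by
  rintro rfl
  rw [DirichletCharacter.Odd, MulChar.one_apply isUnit_one.neg] at hχ
  norm_num at hχ

lemma isPrimitive_of_ne_one {R : Type*} [CommMonoidWithZero R] {p : ℕ} [Fact p.Prime]
    {χ : DirichletCharacter R p} (hχ : χ ≠ 1) : χ.IsPrimitive :=
  (Nat.Prime.eq_one_or_self_of_dvd Fact.out _ χ.conductor_dvd_level).resolve_left
    fun h => hχ (eq_one_iff_conductor_eq_one.mpr h)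

lemma sum_odd_apply {n : ℕ} [NeZero n] (a : ZMod n) :
    ∑ χ ∈ Finset.univ.filter (fun χ : DirichletCharacter ℂ n => χ.Odd), χ a =
      (n.totient / 2 : ℂ) * ((if a = 1 then 1 else 0) - if a = -1 then 1 else 0) := by
  have hodd_part : ∀ χ : DirichletCharacter ℂ n,
      (if χ.Odd then χ a else 0) = (χ a - χ (-a)) / 2 := by
    intro χ
    rcases χ.even_or_odd with he | ho
    · rw [if_neg he.not_odd, he.eval_neg]; ring
    · rw [if_pos ho, ho.eval_neg]; ring
  rw [Finset.sum_filter, Finset.sum_congr rfl fun χ _ => hodd_part χ, ← Finset.sum_div,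
    Finset.sum_sub_distrib, sum_characters_eq, sum_characters_eq]
  simp only [neg_eq_iff_eq_neg]
  split_ifs <;> ring

end DirichletCharacter

lemma conjChar_eq_inv {q : ℕ} (χ : DirichletCharacter ℂ q) : conjChar χ = χ⁻¹ := by
  ext a
  exact MulChar.star_apply' χ a

lemma ZMod.sum_Icc_one_natCast {q : ℕ} [NeZero q] {M : Type*} [AddCommMonoid M]
    (g : ZMod q → M) : ∑ m ∈ Finset.Icc 1 q, g m = ∑ z, g z := by
  refine Finset.sum_nbij' (fun m => (m : ZMod q)) (fun z => if z = 0 then q else z.val)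
    (fun _ _ => Finset.mem_univ _) ?_ ?_ ?_ fun _ _ => rfl
  · intro z _
    split_ifs with hz
    · simp [NeZero.one_le]
    · exact Finset.mem_Icc.mpr
        ⟨Nat.one_le_iff_ne_zero.mpr ((ZMod.val_ne_zero z).mpr hz), z.val_lt.le⟩
  · intro m hm
    obtain ⟨h1, h2⟩ := Finset.mem_Icc.mp hm
    rcases h2.lt_or_eq with h | rfl
    · have : (m : ZMod q) ≠ 0 := by
        rw [Ne, ZMod.natCast_eq_zero_iff]
        exact fun hd => (Nat.le_of_dvd (by omega) hd).not_gt h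
      simp [this, ZMod.val_cast_of_lt h]
    · simp
  · intro z _
    split_ifs with hz <;> simp [hz]

lemma gaussTau_eq_gaussSum {q : ℕ} [NeZero q] (χ : DirichletCharacter ℂ q) :
    gaussTau χ = gaussSum χ ZMod.stdAddChar := by
  rw [gaussTau, gaussSum, ← ZMod.sum_Icc_one_natCast]
  refine Finset.sum_congr rfl fun m _ => ?_
  rw [ZMod.stdAddChar_apply, ZMod.toCircle_natCast]

lemma sum_odd_mul_gaussTau_conjChar {p : ℕ} [Fact p.Prime] (w : ZMod p) :
    ∑ χ ∈ Finset.univ.filter (fun χ : DirichletCharacter ℂ p => χ.Odd),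
        χ w * gaussTau (conjChar χ) =
      (p.totient / 2 : ℂ) * (ZMod.stdAddChar w - ZMod.stdAddChar (-w)) := by
  have hshift : ∀ χ : DirichletCharacter ℂ p, χ ≠ 1 →
      χ w * gaussTau (conjChar χ) = ∑ z, χ z⁻¹ * ZMod.stdAddChar (w * z) := by
    intro χ hχ
    have hprim := DirichletCharacter.isPrimitive_of_ne_one (inv_ne_one.mpr hχ)
    have := gaussSum_mulShift_of_isPrimitive ZMod.stdAddChar hprim w
    rw [inv_inv] at this
    rw [conjChar_eq_inv, gaussTau_eq_gaussSum, ← this]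
    simp only [gaussSum, AddChar.mulShift_apply, MulChar.inv_apply']
  rw [Finset.sum_congr rfl fun χ hχ => hshift χ (Finset.mem_filter.mp hχ).2.ne_one,
    Finset.sum_comm]
  simp only [← Finset.sum_mul, DirichletCharacter.sum_odd_apply,
    inv_eq_iff_eq_inv, inv_neg, inv_one]
  simp [mul_sub, sub_mul, Finset.sum_sub_distrib, ite_mul]

lemma sin_eq_sum_odd_char {p : ℕ} (hp : p.Prime) (a : ℤ) (n : ℕ) :
    (Real.sin (2 * π * n * a / p) : ℂ) =
      -I / p.totient * ∑ χ ∈ Finset.univ.filter (fun χ : DirichletCharacter ℂ p => χ.Odd),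
        χ a * gaussTau (conjChar χ) * χ n := by
  have : Fact p.Prime := ⟨hp⟩
  have hφ : (p.totient : ℂ) ≠ 0 := by exact_mod_cast (Nat.totient_pos.mpr hp.pos).ne'
  have hchar : ∀ χ : DirichletCharacter ℂ p,
      χ a * gaussTau (conjChar χ) * χ n = χ ((a * n : ℤ) : ZMod p) * gaussTau (conjChar χ) := by
    intro χ
    push_cast
    rw [map_mul]
    ring
  simp only [hchar, sum_odd_mul_gaussTau_conjChar, ← Int.cast_neg, ZMod.stdAddChar_coe,
    Complex.ofReal_sin, Complex.sin]
  field_simp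
  push_cast
  ring_nf

lemma filter_piFinset_divisors_prod_eq (k n : ℕ) :
    (Fintype.piFinset fun _ : Fin k => n.divisors).filter (fun t => ∏ j, t j = n) =
      Nat.finMulAntidiag k n := by
  rcases eq_or_ne n 0 with rfl | hn
  · ext t
    simp only [Finset.mem_filter, Fintype.mem_piFinset, Nat.divisors_zero,
      Finset.notMem_empty, Nat.finMulAntidiag_zero_right, iff_false, not_and]
    intro ht hprod
    obtain ⟨j, -⟩ := Finset.prod_eq_zero_iff.mp hprod
    exact ht j
  · exact (Nat.finMulAntidiag_eq_piFinset_divisors_filter dvd_rfl hn).symm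

lemma dChiK_eq_sum_finMulAntidiag {k : ℕ} {p : Fin k → ℕ}
    (χ : ∀ j, DirichletCharacter ℂ (p j)) (n : ℕ) :
    dChiK χ n = ∑ t ∈ Nat.finMulAntidiag k n, ∏ j, χ j (t j) := by
  rw [dChiK, filter_piFinset_divisors_prod_eq]

lemma prod_ne_zero_of_mem_piFinset_Icc {k N : ℕ} {t : Fin k → ℕ}
    (ht : t ∈ Fintype.piFinset fun _ : Fin k => Finset.Icc 1 N) : ∏ j, t j ≠ 0 :=
  Finset.prod_ne_zero_iff.mpr fun j _ =>
    Nat.one_le_iff_ne_zero.mp (Finset.mem_Icc.mp (Fintype.mem_piFinset.mp ht j)).1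

lemma filter_piFinset_Icc_prod_eq {k n N : ℕ} (hn : n ≤ N) :
    (Fintype.piFinset fun _ : Fin k => Finset.Icc 1 N).filter (fun t => ∏ j, t j = n) =
      Nat.finMulAntidiag k n := by
  ext t
  simp only [Finset.mem_filter, Nat.mem_finMulAntidiag]
  constructor
  · rintro ⟨ht, rfl⟩
    exact ⟨rfl, prod_ne_zero_of_mem_piFinset_Icc ht⟩
  · rintro ⟨rfl, hn0⟩
    refine ⟨Fintype.mem_piFinset.mpr fun j => Finset.mem_Icc.mpr ⟨?_, ?_⟩, rfl⟩
    · exact Nat.pos_of_ne_zero (Finset.prod_ne_zero_iff.mp hn0 j (Finset.mem_univ j))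
    · exact (Nat.le_of_dvd (Nat.pos_of_ne_zero hn0)
        (Finset.dvd_prod_of_mem _ (Finset.mem_univ j))).trans hn

lemma primedTupleSumC_eq_primedSumC (k : ℕ) (x : ℝ) (f : (Fin k → ℕ) → ℂ) :
    primedTupleSumC k x f = primedSumC x fun n => ∑ t ∈ Nat.finMulAntidiag k n, f t := by
  set S := Fintype.piFinset fun _ : Fin k => Finset.Icc 1 ⌊x⌋₊
  have hprod_le : ∀ t ∈ S, ((∏ j, t j : ℕ) : ℝ) ≤ x ↔ ∏ j, t j ≤ ⌊x⌋₊ :=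
    fun t ht => (Nat.le_floor_iff' (prod_ne_zero_of_mem_piFinset_Icc ht)).symm
  have hfiberwise : ∑ t ∈ S.filter (fun t => ((∏ j, t j : ℕ) : ℝ) ≤ x), f t =
      ∑ n ∈ Finset.Icc 1 ⌊x⌋₊, ∑ t ∈ Nat.finMulAntidiag k n, f t := by
    have hmaps : ∀ t ∈ S.filter (fun t => ((∏ j, t j : ℕ) : ℝ) ≤ x),
        ∏ j, t j ∈ Finset.Icc 1 ⌊x⌋₊ := by
      intro t ht
      obtain ⟨hS, hx⟩ := Finset.mem_filter.mp ht
      exact Finset.mem_Icc.mpr ⟨Nat.one_le_iff_ne_zero.mpr (prod_ne_zero_of_mem_piFinset_Icc hS),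
        (hprod_le t hS).mp hx⟩
    rw [← Finset.sum_fiberwise_of_maps_to hmaps]
    refine Finset.sum_congr rfl fun n hn => ?_
    rw [Finset.filter_filter, ← filter_piFinset_Icc_prod_eq (Finset.mem_Icc.mp hn).2]
    refine Finset.sum_congr (Finset.filter_congr fun t ht => ?_) fun _ _ => rfl
    rw [hprod_le t ht]
    exact and_iff_right_of_imp fun h => h ▸ (Finset.mem_Icc.mp hn).2
  have hx_nat : (∃ m : ℕ, (m : ℝ) = x) ↔ (⌊x⌋₊ : ℝ) = x :=
    ⟨fun ⟨m, hm⟩ => hm ▸ by rw [Nat.floor_natCast], fun h => ⟨_, h⟩⟩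
  rw [primedTupleSumC, primedSumC, hfiberwise]
  congr 1
  by_cases hx : (⌊x⌋₊ : ℝ) = x
  · rw [if_pos (hx_nat.mpr hx), if_pos hx, ← filter_piFinset_Icc_prod_eq le_rfl]
    congr 2
    refine Finset.filter_congr fun t _ => ?_
    rw [← Nat.cast_inj (R := ℝ), hx]
  · rw [if_neg (mt hx_nat.mp hx), if_neg hx]

lemma primedSumC_sum_mul {ι : Type*} (x : ℝ) (s : Finset ι) (c : ι → ℂ) (f : ι → ℕ → ℂ) :
    primedSumC x (fun n => ∑ i ∈ s, c i * f i n) = ∑ i ∈ s, c i * primedSumC x (f i) := by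
  simp only [primedSumC, mul_sub, Finset.sum_sub_distrib, Finset.mul_sum]
  rw [Finset.sum_comm]
  split_ifs
  · simp only [mul_left_comm]
  · simp

lemma prod_sin_eq_sum_odd_chars {k : ℕ} {p : Fin k → ℕ} (hp : ∀ j, (p j).Prime)
    (a : Fin k → ℤ) (t : Fin k → ℕ) :
    ((∏ j, Real.sin (2 * π * t j * a j / p j) : ℝ) : ℂ) =
      (-I) ^ k / (∏ j, ((p j).totient : ℂ)) *
        ∑ χ ∈ Fintype.piFinset
            (fun j => Finset.univ.filter fun χ : DirichletCharacter ℂ (p j) => χ.Odd),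
          (∏ j, χ j (a j) * gaussTau (conjChar (χ j))) * ∏ j, χ j (t j) := by
  simp only [Complex.ofReal_prod, fun j => sin_eq_sum_odd_char (hp j) (a j) (t j),
    Finset.prod_mul_distrib, Finset.prod_univ_sum]
  rw [Finset.prod_div_distrib, Finset.prod_const, Finset.card_univ, Fintype.card_fin]

lemma sum_finMulAntidiag_prod_sin {k : ℕ} {p : Fin k → ℕ} (hp : ∀ j, (p j).Prime)
    (a : Fin k → ℤ) (n : ℕ) :
    ∑ t ∈ Nat.finMulAntidiag k n, ((∏ j, Real.sin (2 * π * t j * a j / p j) : ℝ) : ℂ) =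
      (-I) ^ k / (∏ j, ((p j).totient : ℂ)) *
        ∑ χ ∈ Fintype.piFinset
            (fun j => Finset.univ.filter fun χ : DirichletCharacter ℂ (p j) => χ.Odd),
          (∏ j, χ j (a j) * gaussTau (conjChar (χ j))) * dChiK χ n := by
  simp only [prod_sin_eq_sum_odd_chars hp, dChiK_eq_sum_finMulAntidiag, Finset.mul_sum]
  exact Finset.sum_comm

theorem sine_sum_eq_character_sum_general {k : ℕ} {p : Fin k → ℕ}
    (hp : ∀ j, (p j).Prime) (a : Fin k → ℤ)
    (ρ : ℝ) (x : ℝ) :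
    primedTupleSumC k x (fun t =>
        ((((∏ j, t j : ℕ) : ℝ) * (∏ j, Real.sin (2 * π * (t j) * (a j) / (p j))) *
          ((x ^ 2 - ((∏ j, t j : ℕ) : ℝ) ^ 2) ^ ρ) : ℝ) : ℂ)) =
      (-Complex.I) ^ k / (∏ j, (Nat.totient (p j) : ℂ)) *
        ∑ χ ∈ Fintype.piFinset
            (fun j => Finset.univ.filter
              fun χ : DirichletCharacter ℂ (p j) => χ.Odd),
          (∏ j, (χ j) ((a j) : ZMod (p j)) * gaussTau (conjChar (χ j))) *
            primedSumC x (fun n =>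
              (n : ℂ) * dChiK χ n * (((x ^ 2 - (n : ℝ) ^ 2) ^ ρ : ℝ) : ℂ)) := by
  have hfiber : ∀ n : ℕ, ∑ t ∈ Nat.finMulAntidiag k n,
      ((((∏ j, t j : ℕ) : ℝ) * (∏ j, Real.sin (2 * π * (t j) * (a j) / (p j))) *
        ((x ^ 2 - ((∏ j, t j : ℕ) : ℝ) ^ 2) ^ ρ) : ℝ) : ℂ) =
      ∑ χ ∈ Fintype.piFinset
          (fun j => Finset.univ.filter fun χ : DirichletCharacter ℂ (p j) => χ.Odd),
        (-Complex.I) ^ k / (∏ j, (Nat.totient (p j) : ℂ)) *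
          (∏ j, (χ j) ((a j) : ZMod (p j)) * gaussTau (conjChar (χ j))) *
          ((n : ℂ) * dChiK χ n * (((x ^ 2 - (n : ℝ) ^ 2) ^ ρ : ℝ) : ℂ)) := by
    intro n
    rw [Finset.sum_congr rfl fun t ht => by rw [Nat.prod_eq_of_mem_finMulAntidiag ht]]
    simp only [Complex.ofReal_mul, Complex.ofReal_natCast]
    rw [← Finset.sum_mul, ← Finset.mul_sum, sum_finMulAntidiag_prod_sin hp, Finset.mul_sum,
      Finset.mul_sum, Finset.sum_mul]
    refine Finset.sum_congr rfl fun χ _ => ?_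
    ring
  rw [primedTupleSumC_eq_primedSumC, funext hfiber, primedSumC_sum_mul, Finset.mul_sum]
  simp only [mul_assoc]

theorem sine_sum_eq_character_sum {k : ℕ} (hk : 1 ≤ k) {p : Fin k → ℕ}
    (hp : ∀ j, (p j).Prime) (a : Fin k → ℤ)
    (ha : ∀ j, Int.gcd (a j) (p j) = 1)
    (ρ : ℝ) (hρ : 0 ≤ ρ) (x : ℝ) (hx : 0 < x) :
    primedTupleSumC k x (fun t =>
        ((((∏ j, t j : ℕ) : ℝ) * (∏ j, Real.sin (2 * π * (t j) * (a j) / (p j))) *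
          ((x ^ 2 - ((∏ j, t j : ℕ) : ℝ) ^ 2) ^ ρ) : ℝ) : ℂ)) =
      (-Complex.I) ^ k / (∏ j, (Nat.totient (p j) : ℂ)) *
        ∑ χ ∈ Fintype.piFinset
            (fun j => Finset.univ.filter
              fun χ : DirichletCharacter ℂ (p j) => χ.Odd),
          (∏ j, (χ j) ((a j) : ZMod (p j)) * gaussTau (conjChar (χ j))) *
            primedSumC x (fun n =>
              (n : ℂ) * dChiK χ n * (((x ^ 2 - (n : ℝ) ^ 2) ^ ρ : ℝ) : ℂ)) :=
  sine_sum_eq_character_sum_general hp a ρ x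
end

section
/- Let a > 0, β ∈ ℝ, σ ∈ (0,1), and let w be a complex number with Re w > 1/4. Then there exists a constant C > 0, depending only on a, β, σ, and w, such that for every θ ∈ (0,1), every integer m ≥ 0, and every integer M ≥ 1, the series ∑_{n=M}^{∞} cos(a√((m+σ)(n+θ)) + β) / (n+θ)^{w+1/4} converges and its sum has absolute value at most C √(m+σ) / (M+θ)^{Re w − 1/4}. -/
/-!
Write `λ = a √(m + σ)`, `s = w + 1/4` and `F x = cos (λ √x + β) x^(-s)`. Since
`(sin (λ √x + β))' = λ cos (λ √x + β) / (2 √x)`, the function `F` is, up to an error `R` of size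
`O(x^(-Re s - 1/2) / λ)`, the derivative of `G x = (2/λ) x^(1/2 - s) sin (λ √x + β)`, which is
`O(x^(1/2 - Re s) / λ)`. Hence `F (n + θ)` differs from `G (n + θ + 1) - G (n + θ)` by
`O((λ + ‖s‖ + 1/λ) (n + θ)^(-Re s - 1/2))`, which is summable since `Re s > 1/2`, while the
telescoped sum tends to `-G (M + θ)`. As `λ ≥ a √σ`, every constant is `O(λ) = O(√(m + σ))`.
-/

open Filter Topology

lemma summable_add_nat_rpow_neg {b q : ℝ} (hb : 0 < b) (hq : 1 < q) :
    Summable fun k : ℕ => (b + k) ^ (-q) := by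
  refine ((Real.summable_one_div_nat_add_rpow b q).2 hq).congr fun k => ?_
  rw [abs_of_pos (by positivity), Real.rpow_neg (by positivity), one_div, add_comm]

lemma tsum_add_nat_rpow_neg_le {b q : ℝ} (hb : 0 < b) (hq : 1 < q) :
    ∑' k : ℕ, (b + k) ^ (-q) ≤ b ^ (-q) + b ^ (1 - q) / (q - 1) := by
  refine Real.tsum_le_of_sum_range_le (fun k => by positivity) fun K => ?_
  cases K with
  | zero => simp only [Finset.range_zero, Finset.sum_empty]; positivity
  | succ K =>
    have hanti : AntitoneOn (fun x : ℝ => x ^ (-q)) (Set.Icc b (b + K)) := fun x hx y _ hxy =>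
      Real.rpow_le_rpow_of_nonpos (hb.trans_le hx.1) hxy (by linarith)
    have hint : ∫ x in b..b + K, x ^ (-q) = (b ^ (1 - q) - (b + K) ^ (1 - q)) / (q - 1) := by
      rw [integral_rpow (Or.inr ⟨by linarith, fun h0 => ?_⟩)]
      · rw [div_eq_div_iff (by linarith) (by linarith)]; ring_nf
      · rw [Set.uIcc_of_le (by linarith [K.cast_nonneg (α := ℝ)])] at h0; linarith [h0.1]
    have htail : 0 ≤ (b + K) ^ (1 - q) / (q - 1) := div_nonneg (by positivity) (by linarith)
    have hsum := hanti.sum_le_integral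
    rw [hint, sub_div] at hsum
    rw [Finset.sum_range_succ', Nat.cast_zero, add_zero]
    linarith

section Telescoping

variable {E : Type*} [NormedAddCommGroup E]

lemma tendsto_sum_Icc_of_tendsto_sum_range {f : ℕ → E} {M : ℕ} {S : E}
    (h : Tendsto (fun K => ∑ k ∈ Finset.range K, f (M + k)) atTop (𝓝 S)) :
    Tendsto (fun N => ∑ n ∈ Finset.Icc M N, f n) atTop (𝓝 S) := by
  have hIcc (N : ℕ) : ∑ n ∈ Finset.Icc M N, f n = ∑ k ∈ Finset.range (N + 1 - M), f (M + k) := by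
    rw [← Finset.sum_Ico_eq_sum_range, Finset.Ico_add_one_right_eq_Icc]
  simp only [hIcc]
  exact h.comp ((tendsto_sub_atTop_nat M).comp (tendsto_add_atTop_nat 1))

lemma tendsto_sum_range_of_summable_sub_telescoping {f g : ℕ → E}
    (hg : Tendsto g atTop (𝓝 0)) (hd : Summable fun k => f k - (g (k + 1) - g k)) :
    Tendsto (fun K => ∑ k ∈ Finset.range K, f k) atTop
      (𝓝 ((∑' k, (f k - (g (k + 1) - g k))) - g 0)) := by
  have hsplit (K : ℕ) : ∑ k ∈ Finset.range K, f k =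
      ∑ k ∈ Finset.range K, (f k - (g (k + 1) - g k)) + (g K - g 0) := by
    rw [Finset.sum_sub_distrib, Finset.sum_range_sub, sub_add_cancel]
  simpa only [hsplit, zero_sub, ← sub_eq_add_neg] using
    hd.hasSum.tendsto_sum_nat.add (hg.sub_const (g 0))

variable [NormedSpace ℝ E]

lemma norm_sub_sub_le_of_hasDerivAt {F F' G R : ℝ → E} {x B₁ B₂ : ℝ}
    (hF : ∀ t ∈ Set.Icc x (x + 1), HasDerivAt F (F' t) t)
    (hF' : ∀ t ∈ Set.Icc x (x + 1), ‖F' t‖ ≤ B₁)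
    (hG : ∀ t ∈ Set.Icc x (x + 1), HasDerivAt G (F t + R t) t)
    (hR : ∀ t ∈ Set.Icc x (x + 1), ‖R t‖ ≤ B₂) :
    ‖F x - (G (x + 1) - G x)‖ ≤ B₁ + B₂ := by
  have hx : x ∈ Set.Icc x (x + 1) := Set.left_mem_Icc.2 (by linarith)
  have hx₁ : x + 1 ∈ Set.Icc x (x + 1) := Set.right_mem_Icc.2 (by linarith)
  have hB₁ : 0 ≤ B₁ := (norm_nonneg _).trans (hF' x hx)
  have hFvar : ∀ t ∈ Set.Icc x (x + 1), ‖F t - F x‖ ≤ B₁ := fun t ht => by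
    have := (convex_Icc x (x + 1)).norm_image_sub_le_of_norm_hasDerivWithin_le
      (fun y hy => (hF y hy).hasDerivWithinAt) hF' hx ht
    have hdist : ‖t - x‖ ≤ 1 := by
      rw [Real.norm_eq_abs, abs_le]; constructor <;> linarith [ht.1, ht.2]
    nlinarith
  -- `G t - t • F x` has derivative `(F t - F x) + R t`, which is small on the interval.
  have key := (convex_Icc x (x + 1)).norm_image_sub_le_of_norm_hasDerivWithin_le
    (f := fun t => G t - t • F x) (f' := fun t => F t - F x + R t) (C := B₁ + B₂)
    (fun t ht => by
      simpa only [id, one_smul, sub_add_eq_add_sub] using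
        ((hG t ht).fun_sub ((hasDerivAt_id t).smul_const (F x))).hasDerivWithinAt)
    (fun t ht => (norm_add_le _ _).trans (add_le_add (hFvar t ht) (hR t ht))) hx hx₁
  rw [← norm_neg]
  convert key using 1
  · congr 1; simp only [add_smul, one_smul]; abel
  · simp

lemma norm_sub_sub_le_mul_rpow_of_hasDerivAt {F F' G R : ℝ → E} {b x q A₁ A₂ : ℝ}
    (hb : 0 < b) (hq : 0 ≤ q) (hx : b ≤ x)
    (hF : ∀ t ≥ b, HasDerivAt F (F' t) t) (hG : ∀ t ≥ b, HasDerivAt G (F t + R t) t)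
    (hF' : ∀ t ≥ b, ‖F' t‖ ≤ A₁ * t ^ (-q)) (hR : ∀ t ≥ b, ‖R t‖ ≤ A₂ * t ^ (-q)) :
    ‖F x - (G (x + 1) - G x)‖ ≤ (A₁ + A₂) * x ^ (-q) := by
  have hA₁ : 0 ≤ A₁ :=
    nonneg_of_mul_nonneg_left ((norm_nonneg _).trans (hF' b le_rfl)) (by positivity)
  have hA₂ : 0 ≤ A₂ :=
    nonneg_of_mul_nonneg_left ((norm_nonneg _).trans (hR b le_rfl)) (by positivity)
  have hle : ∀ t ∈ Set.Icc x (x + 1), b ≤ t ∧ t ^ (-q) ≤ x ^ (-q) := fun t ht =>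
    ⟨hx.trans ht.1, Real.rpow_le_rpow_of_nonpos (hb.trans_le hx) ht.1 (by linarith)⟩
  rw [add_mul]
  exact norm_sub_sub_le_of_hasDerivAt (fun t ht => hF t (hle t ht).1)
    (fun t ht => (hF' t (hle t ht).1).trans (mul_le_mul_of_nonneg_left (hle t ht).2 hA₁))
    (fun t ht => hG t (hle t ht).1)
    (fun t ht => (hR t (hle t ht).1).trans (mul_le_mul_of_nonneg_left (hle t ht).2 hA₂))

theorem exists_tendsto_sum_range_of_hasDerivAt [CompleteSpace E] {F F' G R : ℝ → E}
    {b r A₁ A₂ B : ℝ} (hb : 1 ≤ b) (hr : 0 < r)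
    (hF : ∀ x ≥ b, HasDerivAt F (F' x) x) (hG : ∀ x ≥ b, HasDerivAt G (F x + R x) x)
    (hF' : ∀ x ≥ b, ‖F' x‖ ≤ A₁ * x ^ (-(r + 1)))
    (hR : ∀ x ≥ b, ‖R x‖ ≤ A₂ * x ^ (-(r + 1)))
    (hGb : ∀ x ≥ b, ‖G x‖ ≤ B * x ^ (-r)) :
    ∃ S, Tendsto (fun K => ∑ k ∈ Finset.range K, F (b + k)) atTop (𝓝 S) ∧
      ‖S‖ ≤ ((A₁ + A₂) * (1 + 1 / r) + B) * b ^ (-r) := by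
  have hb₀ : 0 < b := by linarith
  set g : ℕ → E := fun k => G (b + k)
  set d : ℕ → E := fun k => F (b + k) - (g (k + 1) - g k)
  have hd (k : ℕ) : ‖d k‖ ≤ (A₁ + A₂) * (b + k) ^ (-(r + 1)) := by
    have hcast : b + ((k + 1 : ℕ) : ℝ) = b + k + 1 := by push_cast; ring
    simpa only [d, g, hcast] using norm_sub_sub_le_mul_rpow_of_hasDerivAt hb₀ (by linarith)
      (by linarith [k.cast_nonneg (α := ℝ)]) hF hG hF' hR
  have hsum := (summable_add_nat_rpow_neg hb₀ (by linarith : 1 < r + 1)).mul_left (A₁ + A₂)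
  have hg : Tendsto g atTop (𝓝 0) := by
    refine squeeze_zero_norm (fun k => hGb (b + k) (by simp)) ?_
    simpa using ((tendsto_rpow_neg_atTop hr).comp
      (tendsto_atTop_add_const_left _ b tendsto_natCast_atTop_atTop)).const_mul B
  refine ⟨∑' k, d k - g 0, tendsto_sum_range_of_summable_sub_telescoping hg
    (.of_norm_bounded hsum hd), ?_⟩
  have htail := tsum_add_nat_rpow_neg_le hb₀ (by linarith : 1 < r + 1)
  rw [show 1 - (r + 1) = -r by ring, add_sub_cancel_right] at htail
  have hpow : b ^ (-(r + 1)) ≤ b ^ (-r) := Real.rpow_le_rpow_of_exponent_le hb (by linarith)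
  have hG₀ : ‖g 0‖ ≤ B * b ^ (-r) := by simpa [g] using hGb b le_rfl
  calc ‖∑' k, d k - g 0‖ ≤ (A₁ + A₂) * ∑' k : ℕ, (b + k) ^ (-(r + 1)) + B * b ^ (-r) :=
        (norm_sub_le _ _).trans (add_le_add (tsum_of_norm_bounded
          (by rw [← tsum_mul_left]; exact hsum.hasSum) hd) hG₀)
    _ ≤ (A₁ + A₂) * (b ^ (-r) + b ^ (-r) / r) + B * b ^ (-r) := by
        gcongr
        · exact nonneg_of_mul_nonneg_left ((norm_nonneg _).trans (hd 0)) (by positivity)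
        · linarith
    _ = ((A₁ + A₂) * (1 + 1 / r) + B) * b ^ (-r) := by ring

end Telescoping

noncomputable def oscTerm (lam β : ℝ) (s : ℂ) (x : ℝ) : ℂ :=
  Real.cos (lam * √x + β) * (x : ℂ) ^ (-s)

noncomputable def oscPrimitive (lam β : ℝ) (s : ℂ) (x : ℝ) : ℂ :=
  ((2 / lam : ℝ) : ℂ) * ((x : ℂ) ^ (1 / 2 - s) * Real.sin (lam * √x + β))

section Oscillatory

variable {lam β x : ℝ} {s : ℂ}

lemma ofReal_cos_div_cpow_eq_oscTerm {a c : ℝ} (hc : 0 ≤ c) (s : ℂ) :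
    (Real.cos (a * √(c * x) + β) : ℂ) / (x : ℂ) ^ s = oscTerm (a * √c) β s x := by
  rw [oscTerm, Real.sqrt_mul hc, Complex.cpow_neg, div_eq_mul_inv, mul_assoc]

lemma hasDerivAt_mul_sqrt_add (hx : 0 < x) :
    HasDerivAt (fun y => lam * √y + β) (lam / (2 * √x)) x := by
  simpa [div_eq_mul_inv] using ((Real.hasDerivAt_sqrt hx.ne').const_mul lam).add_const β

lemma rpow_neg_div_sqrt (hx : 0 < x) (p : ℝ) : x ^ (-p) / √x = x ^ (-(p + 1 / 2)) := by
  rw [Real.sqrt_eq_rpow, ← Real.rpow_sub hx]; ring_nf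

lemma ofReal_cpow_one_half_sub (hx : 0 < x) (s : ℂ) :
    (x : ℂ) ^ (1 / 2 - s) = (√x : ℂ) * (x : ℂ) ^ (-s) := by
  rw [sub_eq_add_neg, Complex.cpow_add _ _ (Complex.ofReal_ne_zero.2 hx.ne'), Real.sqrt_eq_rpow,
    Complex.ofReal_cpow hx.le]
  norm_num

lemma exists_hasDerivAt_oscTerm (hlam : 0 ≤ lam) (hs : s ≠ 0) :
    ∃ F' : ℝ → ℂ, ∀ x ≥ 1, HasDerivAt (oscTerm lam β s) (F' x) x ∧
      ‖F' x‖ ≤ (lam / 2 + ‖s‖) * x ^ (-(s.re + 1 / 2)) := by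
  refine ⟨fun x => ((-Real.sin (lam * √x + β) * (lam / (2 * √x)) : ℝ) : ℂ) * (x : ℂ) ^ (-s) +
    Real.cos (lam * √x + β) * (-s * (x : ℂ) ^ (-s - 1)), fun x hx => ⟨?_, ?_⟩⟩
  · have hx₀ : 0 < x := by linarith
    exact (((Real.hasDerivAt_cos _).comp x (hasDerivAt_mul_sqrt_add hx₀)).ofReal_comp).mul
      (hasDerivAt_ofReal_cpow_const hx₀.ne' (neg_ne_zero.2 hs))
  · have hx₀ : 0 < x := by linarith
    have h₁ : ‖((-Real.sin (lam * √x + β) * (lam / (2 * √x)) : ℝ) : ℂ) * (x : ℂ) ^ (-s)‖ ≤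
        lam / 2 * x ^ (-(s.re + 1 / 2)) := by
      rw [norm_mul, Complex.norm_real, Complex.norm_cpow_eq_rpow_re_of_pos hx₀, Complex.neg_re,
        ← rpow_neg_div_sqrt hx₀, Real.norm_eq_abs, abs_mul, abs_neg,
        abs_of_nonneg (by positivity : 0 ≤ lam / (2 * √x))]
      have := Real.abs_sin_le_one (lam * √x + β)
      calc _ ≤ 1 * (lam / (2 * √x)) * x ^ (-s.re) := by gcongr
        _ = _ := by ring
    have h₂ : ‖(Real.cos (lam * √x + β) : ℂ) * (-s * (x : ℂ) ^ (-s - 1))‖ ≤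
        ‖s‖ * x ^ (-(s.re + 1 / 2)) := by
      rw [norm_mul, norm_mul, norm_neg, Complex.norm_real, Complex.norm_cpow_eq_rpow_re_of_pos hx₀]
      have := Real.abs_cos_le_one (lam * √x + β)
      have hexp : x ^ (-s - 1).re ≤ x ^ (-(s.re + 1 / 2)) :=
        Real.rpow_le_rpow_of_exponent_le hx
          (by simp only [Complex.sub_re, Complex.neg_re, Complex.one_re]; linarith)
      calc _ ≤ 1 * (‖s‖ * x ^ (-(s.re + 1 / 2))) := by gcongr; exact this
        _ = _ := one_mul _
    exact (norm_add_le _ _).trans (by rw [add_mul]; exact add_le_add h₁ h₂)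

lemma exists_hasDerivAt_oscPrimitive (hlam : 0 < lam) (hs : s ≠ 1 / 2) :
    ∃ R : ℝ → ℂ, ∀ x > 0, HasDerivAt (oscPrimitive lam β s) (oscTerm lam β s x + R x) x ∧
      ‖R x‖ ≤ 2 * ‖1 / 2 - s‖ / lam * x ^ (-(s.re + 1 / 2)) := by
  refine ⟨fun x => ((2 / lam : ℝ) : ℂ) * ((1 / 2 - s) * (x : ℂ) ^ (1 / 2 - s - 1) *
    Real.sin (lam * √x + β)), fun x hx => ⟨?_, ?_⟩⟩
  · have hderiv := ((hasDerivAt_ofReal_cpow_const hx.ne' (sub_ne_zero.2 hs.symm)).mul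
      ((Real.hasDerivAt_sin _).comp x
        (hasDerivAt_mul_sqrt_add (lam := lam) (β := β) hx)).ofReal_comp).const_mul
      ((2 / lam : ℝ) : ℂ)
    refine hderiv.congr_deriv ?_
    have hsqrt : (√x : ℂ) ≠ 0 := Complex.ofReal_ne_zero.2 (Real.sqrt_pos.2 hx).ne'
    have hlam' : (lam : ℂ) ≠ 0 := Complex.ofReal_ne_zero.2 hlam.ne'
    simp only [oscTerm, Function.comp_apply, ofReal_cpow_one_half_sub hx]
    push_cast
    field_simp
    ring
  · rw [norm_mul, norm_mul, norm_mul, Complex.norm_real, Complex.norm_real,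
      Complex.norm_cpow_eq_rpow_re_of_pos hx, Real.norm_of_nonneg (by positivity)]
    have := (Real.norm_eq_abs _).trans_le (Real.abs_sin_le_one (lam * √x + β))
    have hre : (1 / 2 - s - 1).re = -(s.re + 1 / 2) := by
      simp only [Complex.sub_re, Complex.one_re, Complex.div_ofNat_re]; ring
    rw [hre]
    calc _ ≤ 2 / lam * (‖1 / 2 - s‖ * x ^ (-(s.re + 1 / 2)) * 1) := by gcongr
      _ = _ := by ring

lemma norm_oscPrimitive_le (hlam : 0 < lam) (hx : 0 < x) :
    ‖oscPrimitive lam β s x‖ ≤ 2 / lam * x ^ (-(s.re - 1 / 2)) := by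
  rw [oscPrimitive, norm_mul, norm_mul, Complex.norm_real, Complex.norm_real,
    Complex.norm_cpow_eq_rpow_re_of_pos hx, Real.norm_of_nonneg (by positivity)]
  have := (Real.norm_eq_abs _).trans_le (Real.abs_sin_le_one (lam * √x + β))
  have hre : (1 / 2 - s).re = -(s.re - 1 / 2) := by
    simp only [Complex.sub_re, Complex.div_ofNat_re, Complex.one_re]; ring
  rw [hre]
  calc _ ≤ 2 / lam * (x ^ (-(s.re - 1 / 2)) * 1) := by gcongr
    _ = _ := by ring

theorem exists_tendsto_sum_range_oscTerm {lam₀ : ℝ} (β : ℝ) (hlam₀ : 0 < lam₀)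
    (hs : 1 / 2 < s.re) :
    ∃ K, 0 < K ∧ ∀ lam ≥ lam₀, ∀ b ≥ 1, ∃ S : ℂ,
      Tendsto (fun N => ∑ k ∈ Finset.range N, oscTerm lam β s (b + k)) atTop (𝓝 S) ∧
      ‖S‖ ≤ K * lam * b ^ (-(s.re - 1 / 2)) := by
  set r := s.re - 1 / 2 with hr_def
  have hr : 0 < r := by linarith
  have hs₀ : s ≠ 0 := by rintro rfl; norm_num at hs
  have hs₁ : s ≠ 1 / 2 := by rintro rfl; norm_num at hs
  refine ⟨(1 / 2 + ‖s‖ / lam₀ + 2 * ‖1 / 2 - s‖ / lam₀ ^ 2) * (1 + 1 / r) + 2 / lam₀ ^ 2,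
    by positivity, fun lam hlam b hb => ?_⟩
  have hlam' : 0 < lam := by linarith
  have hexp : s.re + 1 / 2 = r + 1 := by ring
  obtain ⟨F', hF'⟩ := exists_hasDerivAt_oscTerm (β := β) hlam'.le hs₀
  obtain ⟨R, hR⟩ := exists_hasDerivAt_oscPrimitive (β := β) hlam' hs₁
  obtain ⟨S, hS, hSle⟩ := exists_tendsto_sum_range_of_hasDerivAt hb hr
    (fun x hx => (hF' x (hb.trans hx)).1) (fun x hx => (hR x (by linarith)).1)
    (fun x hx => hexp ▸ (hF' x (hb.trans hx)).2) (fun x hx => hexp ▸ (hR x (by linarith)).2)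
    (fun x hx => norm_oscPrimitive_le hlam' (by linarith))
  have hle_mul : ∀ c ≥ 0, c ≤ lam * (c / lam₀) := fun c hc => by
    rw [mul_div_assoc', le_div_iff₀ hlam₀]; nlinarith
  have hdiv_le_mul : ∀ c ≥ 0, c / lam ≤ lam * (c / lam₀ ^ 2) := fun c hc => by
    rw [div_le_iff₀ hlam', show lam * (c / lam₀ ^ 2) * lam = c * (lam ^ 2 / lam₀ ^ 2) by ring]
    exact le_mul_of_one_le_right hc ((one_le_div (by positivity)).2 (by gcongr))
  refine ⟨S, hS, hSle.trans ?_⟩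
  gcongr
  calc (lam / 2 + ‖s‖ + 2 * ‖1 / 2 - s‖ / lam) * (1 + 1 / r) + 2 / lam
      ≤ (lam / 2 + lam * (‖s‖ / lam₀) + lam * (2 * ‖1 / 2 - s‖ / lam₀ ^ 2)) * (1 + 1 / r) +
          lam * (2 / lam₀ ^ 2) := by
        gcongr
        · exact hle_mul _ (norm_nonneg _)
        · exact hdiv_le_mul _ (by positivity)
        · exact hdiv_le_mul _ (by positivity)
    _ = _ := by ring

end Oscillatory

theorem tail_series_bound_general (a : ℝ) (ha : 0 < a) (β : ℝ)
    (σ : ℝ) (hσ : 0 < σ)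
    (w : ℂ) (hw : 1 / 4 < w.re) :
    ∃ C : ℝ, 0 < C ∧ ∀ θ : ℝ, 0 < θ → θ < 1 → ∀ m : ℕ, ∀ M : ℕ, 1 ≤ M →
      ∃ S : ℂ,
        Tendsto (fun N : ℕ => ∑ n ∈ Finset.Icc M N,
            ((Real.cos (a * Real.sqrt ((m + σ) * (n + θ)) + β) : ℝ) : ℂ) /
              (((n + θ : ℝ) : ℂ) ^ (w + 1 / 4)))
          atTop (𝓝 S) ∧
        ‖S‖ ≤ C * Real.sqrt (m + σ) / (M + θ) ^ (w.re - 1 / 4) := by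
  have hre : (w + 1 / 4).re - 1 / 2 = w.re - 1 / 4 := by
    simp only [Complex.add_re, Complex.div_ofNat_re, Complex.one_re]; ring
  obtain ⟨K, hK, hosc⟩ := exists_tendsto_sum_range_oscTerm (s := w + 1 / 4) β
    (by positivity : 0 < a * √σ) (by linarith)
  refine ⟨K * a, by positivity, fun θ hθ _ m M hM => ?_⟩
  have hc : 0 ≤ (m : ℝ) + σ := by positivity
  have hb : (1 : ℝ) ≤ M + θ := by
    have : (1 : ℝ) ≤ M := by exact_mod_cast hM
    linarith
  obtain ⟨S, hS, hSle⟩ := hosc (a * √(m + σ))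
    (by gcongr; linarith [m.cast_nonneg (α := ℝ)]) (M + θ) hb
  refine ⟨S, tendsto_sum_Icc_of_tendsto_sum_range ?_, ?_⟩
  · convert hS using 3 with N k
    rw [ofReal_cos_div_cpow_eq_oscTerm hc]
    push_cast; ring_nf
  · rw [hre, Real.rpow_neg (by linarith)] at hSle
    exact hSle.trans_eq (by ring)

theorem tail_series_bound (a : ℝ) (ha : 0 < a) (β : ℝ)
    (σ : ℝ) (hσ : 0 < σ) (hσ' : σ < 1)
    (w : ℂ) (hw : 1 / 4 < w.re) :
    ∃ C : ℝ, 0 < C ∧ ∀ θ : ℝ, 0 < θ → θ < 1 → ∀ m : ℕ, ∀ M : ℕ, 1 ≤ M →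
      ∃ S : ℂ,
        Tendsto (fun N : ℕ => ∑ n ∈ Finset.Icc M N,
            ((Real.cos (a * Real.sqrt ((m + σ) * (n + θ)) + β) : ℝ) : ℂ) /
              (((n + θ : ℝ) : ℂ) ^ (w + 1 / 4)))
          atTop (𝓝 S) ∧
        ‖S‖ ≤ C * Real.sqrt (m + σ) / (M + θ) ^ (w.re - 1 / 4) :=
  tail_series_bound_general a ha β σ hσ w hw
end
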